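/- Let J be an integrable model structure on ℂⁿ (satisfying ∂L̃_{2n−1,k}/∂z̄^j = ∂L̃_{2n−1,j}/∂z̄^k for all j,k ≤ n−1). Then the global diffeomorphism F of ℂⁿ defined by F('z, zⁿ) = ('z, zⁿ − (i/4)Σ_j z̄^j L̃_{2n−1,j}('z,'z̄) − (i/4)Σ_j z̄^j L̃_{2n−1,j}('z,0)) is a (J, J_st)-biholomorphism of ℂⁿ, i.e. dF ∘ J = J_st ∘ dF. -/

import Mathlib

open Complex BigOperators

/-- The entry `L̃_{2n-1,k}(z,z̄) = Σ_{l ≠ k} (α_l^k z^l + β_l^k conj(z^l))`. -/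
noncomputable def Ltilde (n : ℕ) (α β : Fin n → Fin n → ℂ) (k : Fin n) (z : Fin n → ℂ) : ℂ :=
  ∑ l : Fin n, if l = k ∨ (l : ℕ) + 1 = n then 0
    else (α l k * z l + β l k * (starRingEnd ℂ) (z l))

/-- `L̃_{2n-1,k}('z, 0)`: the holomorphic part of `L̃_{2n-1,k}`. -/
noncomputable def Ltilde0 (n : ℕ) (α : Fin n → Fin n → ℂ) (k : Fin n) (z : Fin n → ℂ) : ℂ :=
  ∑ l : Fin n, if l = k ∨ (l : ℕ) + 1 = n then 0 else α l k * z l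

/-- The model almost complex structure on `ℂⁿ` in complex coordinates. -/
noncomputable def modelJ (n : ℕ) (α β : Fin n → Fin n → ℂ)
    (z : Fin n → ℂ) (v : Fin n → ℂ) : Fin n → ℂ := fun k =>
  if (k : ℕ) + 1 = n then
    Complex.I * v k +
      ∑ j : Fin n, (if (j : ℕ) + 1 = n then 0
        else Ltilde n α β j z * (starRingEnd ℂ) (v j))
  else Complex.I * v k

/-- The Wirtinger derivative `∂f/∂z̄^j = ½(∂f/∂x^j + i ∂f/∂y^j)` of `f : ℂⁿ → ℂ`. -/
noncomputable def dbar (n : ℕ) (f : (Fin n → ℂ) → ℂ) (j : Fin n) (z : Fin n → ℂ) : ℂ :=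
  (1 / 2 : ℂ) * (fderiv ℝ f z (Pi.single j 1) +
    Complex.I * fderiv ℝ f z (Pi.single j Complex.I))

/-- The global diffeomorphism
`F('z, zⁿ) = ('z, zⁿ - (i/4) Σ_j z̄^j L̃_{2n-1,j}('z,'z̄) - (i/4) Σ_j z̄^j L̃_{2n-1,j}('z,0))`. -/
noncomputable def modelF (n : ℕ) (α β : Fin n → Fin n → ℂ)
    (z : Fin n → ℂ) : Fin n → ℂ := fun k =>
  if (k : ℕ) + 1 = n then
    z k - (Complex.I / 4) *
        (∑ j : Fin n, if (j : ℕ) + 1 = n then 0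
          else (starRingEnd ℂ) (z j) * Ltilde n α β j z)
      - (Complex.I / 4) *
        (∑ j : Fin n, if (j : ℕ) + 1 = n then 0
          else (starRingEnd ℂ) (z j) * Ltilde0 n α j z)
  else z k

/-! Split `L̃_j = A_j + B_j` into its ℂ-linear part `A_j = L̃_j('z, 0)` and its ℂ-antilinear
part `B_j`. The last component of `F` is `zⁿ - (i/4) Σ_j z̄ʲ (2A_j + B_j)(z)`, so its differential
is `w ↦ wⁿ - (i/4) Σ_j (w̄ʲ (2A_j + B_j)(z) + z̄ʲ (2A_j + B_j)(w))`. On `'z` the structure `J` is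
multiplication by `i`, hence `A_j ∘ J = i A_j` and `B_j ∘ J = -i B_j`, and in `dF(Jv) - i dF(v)`
everything cancels except `½ (Σ_j v̄ʲ B_j(z) - Σ_j z̄ʲ B_j(v))`. Integrability says that the
coefficients `∂B_k/∂z̄ʲ = β_j^k` are symmetric in `j, k`, which makes this vanish. -/

open Finset ComplexConjugate

/-- The indices `0, …, n-2` of the coordinates `'z = (z¹, …, zⁿ⁻¹)`. -/
def headIdx (n : ℕ) : Finset (Fin n) := univ.filter fun j => (j : ℕ) + 1 ≠ n

lemma mem_headIdx {n : ℕ} {j : Fin n} : j ∈ headIdx n ↔ (j : ℕ) + 1 ≠ n := by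
  simp [headIdx]

lemma sum_headIdx {M : Type*} [AddCommMonoid M] (n : ℕ) (f : Fin n → M) :
    ∑ j ∈ headIdx n, f j = ∑ j : Fin n, if (j : ℕ) + 1 = n then 0 else f j := by
  rw [headIdx, sum_filter]
  exact sum_congr rfl fun j _ => by split_ifs <;> tauto

theorem Finset.sum_mul_sum_comm_of_symm {ι R : Type*} [CommSemiring R] (s : Finset ι)
    (b : ι → ι → R) (hb : ∀ i ∈ s, ∀ j ∈ s, b i j = b j i) (x y : ι → R) :
    ∑ j ∈ s, x j * ∑ l ∈ s, b l j * y l = ∑ j ∈ s, y j * ∑ l ∈ s, b l j * x l := by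
  simp_rw [mul_sum]
  rw [sum_comm]
  refine sum_congr rfl fun l hl => sum_congr rfl fun j hj => ?_
  rw [hb l hl j hj]
  ring

theorem hasFDerivAt_sum_mul {ι 𝕜 E 𝔸 : Type*} [NontriviallyNormedField 𝕜]
    [NormedAddCommGroup E] [NormedSpace 𝕜 E] [NormedCommRing 𝔸] [NormedAlgebra 𝕜 𝔸]
    (s : Finset ι) (a b : ι → E →L[𝕜] 𝔸) (z : E) :
    HasFDerivAt (fun z => ∑ j ∈ s, a j z * b j z) (∑ j ∈ s, (a j z • b j + b j z • a j)) z :=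
  HasFDerivAt.fun_sum fun j _ => (a j).hasFDerivAt.fun_mul (b j).hasFDerivAt

section Model

variable {n : ℕ}

/-- `Σ_{j=1}^{n-1} ūʲ L_j(w)`. -/
noncomputable def headPairing (n : ℕ) (L : Fin n → (Fin n → ℂ) → ℂ) (u w : Fin n → ℂ) : ℂ :=
  ∑ j ∈ headIdx n, conj (u j) * L j w

lemma Ltilde0_eq_Ltilde (α : Fin n → Fin n → ℂ) : Ltilde0 n α = Ltilde n α 0 := by
  ext k z
  simp [Ltilde0, Ltilde]

/-- `Ltilde n α 0` and `Ltilde n 0 β` are the ℂ-linear and ℂ-antilinear parts of `L̃`. -/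
lemma Ltilde_eq_add (α β : Fin n → Fin n → ℂ) (k : Fin n) (z : Fin n → ℂ) :
    Ltilde n α β k z = Ltilde n α 0 k z + Ltilde n 0 β k z := by
  simp only [Ltilde, ← sum_add_distrib]
  refine sum_congr rfl fun l _ => ?_
  split_ifs <;> simp

@[simp] lemma Ltilde_zero_zero : Ltilde n 0 0 = 0 := by
  ext k z
  simp [Ltilde]

lemma Ltilde_of_head_eq_mul (α β : Fin n → Fin n → ℂ) (k : Fin n) {u v : Fin n → ℂ} {c : ℂ}
    (h : ∀ l ∈ headIdx n, u l = c * v l) :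
    Ltilde n α β k u = c * Ltilde n α 0 k v + conj c * Ltilde n 0 β k v := by
  simp only [Ltilde, mul_sum, ← sum_add_distrib]
  refine sum_congr rfl fun l _ => ?_
  split_ifs with hl
  · simp
  · rw [h l (mem_headIdx.2 fun h' => hl (Or.inr h'))]
    simp only [Pi.zero_apply, map_mul]
    ring

lemma Ltilde_single (α β : Fin n → Fin n → ℂ) (k j : Fin n) (c : ℂ) :
    Ltilde n α β k (Pi.single j c) =
      if j = k ∨ (j : ℕ) + 1 = n then 0 else α j k * c + β j k * conj c := by
  rw [Ltilde, sum_eq_single j]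
  · simp
  · intro l _ hl
    simp [Pi.single_eq_of_ne hl]
  · simp

noncomputable def LtildeCLM (α β : Fin n → Fin n → ℂ) (k : Fin n) : (Fin n → ℂ) →L[ℝ] ℂ :=
  ∑ l : Fin n, if l = k ∨ (l : ℕ) + 1 = n then 0
    else α l k • ContinuousLinearMap.proj l +
      β l k • Complex.conjCLE.toContinuousLinearMap.comp (ContinuousLinearMap.proj l)

@[simp] lemma coe_LtildeCLM (α β : Fin n → Fin n → ℂ) (k : Fin n) :
    ⇑(LtildeCLM α β k) = Ltilde n α β k := by
  ext z
  simp only [LtildeCLM, Ltilde, FunLike.coe_sum, Finset.sum_apply]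
  refine sum_congr rfl fun l _ => ?_
  split_ifs <;> simp

lemma fderiv_Ltilde (α β : Fin n → Fin n → ℂ) (k : Fin n) (z : Fin n → ℂ) :
    fderiv ℝ (Ltilde n α β k) z = LtildeCLM α β k := by
  rw [← coe_LtildeCLM, ContinuousLinearMap.fderiv]

lemma dbar_Ltilde (α β : Fin n → Fin n → ℂ) (k j : Fin n) (z : Fin n → ℂ) :
    dbar n (Ltilde n α β k) j z = if j = k ∨ (j : ℕ) + 1 = n then 0 else β j k := by
  rw [dbar, fderiv_Ltilde, coe_LtildeCLM, Ltilde_single, Ltilde_single]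
  split_ifs
  · simp
  · simp only [map_one, Complex.conj_I]
    linear_combination ((α j k - β j k) / 2) * Complex.I_sq

lemma modelJ_of_mem_headIdx (α β : Fin n → Fin n → ℂ) (z v : Fin n → ℂ) {j : Fin n}
    (hj : j ∈ headIdx n) : modelJ n α β z v j = I * v j := by
  simp [modelJ, mem_headIdx.1 hj]

lemma modelJ_of_last (α β : Fin n → Fin n → ℂ) (z v : Fin n → ℂ) {k : Fin n}
    (hk : (k : ℕ) + 1 = n) :
    modelJ n α β z v k = I * v k + headPairing n (Ltilde n α β) v z := by
  simp only [modelJ, if_pos hk, headPairing, sum_headIdx, mul_comm (conj _)]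

lemma modelF_of_last (α β : Fin n → Fin n → ℂ) (z : Fin n → ℂ) {k : Fin n}
    (hk : (k : ℕ) + 1 = n) :
    modelF n α β z k = z k - I / 4 * headPairing n (Ltilde n α β) z z
      - I / 4 * headPairing n (Ltilde n α 0) z z := by
  simp only [modelF, if_pos hk, headPairing, sum_headIdx, Ltilde0_eq_Ltilde]

@[simp] lemma headPairing_zero (u w : Fin n → ℂ) : headPairing n 0 u w = 0 := by
  simp [headPairing]

lemma headPairing_Ltilde_eq_add (α β : Fin n → Fin n → ℂ) (u w : Fin n → ℂ) :
    headPairing n (Ltilde n α β) u w =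
      headPairing n (Ltilde n α 0) u w + headPairing n (Ltilde n 0 β) u w := by
  simp only [headPairing, ← sum_add_distrib, ← mul_add, ← Ltilde_eq_add]

lemma headPairing_of_head_eq_mul_left (L : Fin n → (Fin n → ℂ) → ℂ) {u v : Fin n → ℂ}
    {c : ℂ} (h : ∀ l ∈ headIdx n, u l = c * v l) (w : Fin n → ℂ) :
    headPairing n L u w = conj c * headPairing n L v w := by
  simp only [headPairing, mul_sum]
  refine sum_congr rfl fun j hj => ?_
  rw [h j hj, map_mul, mul_assoc]

lemma headPairing_Ltilde_of_head_eq_mul_right (α β : Fin n → Fin n → ℂ)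
    {u v : Fin n → ℂ} {c : ℂ} (h : ∀ l ∈ headIdx n, u l = c * v l) (z : Fin n → ℂ) :
    headPairing n (Ltilde n α β) z u =
      c * headPairing n (Ltilde n α 0) z v + conj c * headPairing n (Ltilde n 0 β) z v := by
  simp only [headPairing, mul_sum, ← sum_add_distrib, Ltilde_of_head_eq_mul α β _ h]
  exact sum_congr rfl fun j _ => by ring

lemma headPairing_Ltilde_comm (β : Fin n → Fin n → ℂ)
    (hβ : ∀ j ∈ headIdx n, ∀ k ∈ headIdx n, β j k = β k j) (u w : Fin n → ℂ) :
    headPairing n (Ltilde n 0 β) u w = headPairing n (Ltilde n 0 β) w u := by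
  have hL : ∀ (k : Fin n) (z : Fin n → ℂ), Ltilde n 0 β k z =
      ∑ l ∈ headIdx n, (if l = k then 0 else β l k) * conj (z l) := by
    intro k z
    rw [Ltilde, sum_headIdx]
    exact sum_congr rfl fun l _ => by split_ifs <;> simp_all
  simp only [headPairing, hL]
  refine sum_mul_sum_comm_of_symm _ _ (fun i hi j hj => ?_) _ _
  rcases eq_or_ne i j with rfl | hij
  · rfl
  · rw [if_neg hij, if_neg hij.symm, hβ i hi j hj]

lemma hasFDerivAt_headPairing_Ltilde (α β : Fin n → Fin n → ℂ) (z : Fin n → ℂ) :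
    ∃ D : (Fin n → ℂ) →L[ℝ] ℂ, HasFDerivAt (fun u => headPairing n (Ltilde n α β) u u) D z ∧
      ∀ w, D w = headPairing n (Ltilde n α β) w z + headPairing n (Ltilde n α β) z w := by
  let c : Fin n → (Fin n → ℂ) →L[ℝ] ℂ := fun j =>
    Complex.conjCLE.toContinuousLinearMap.comp (ContinuousLinearMap.proj j)
  refine ⟨∑ j ∈ headIdx n, (c j z • LtildeCLM α β j + LtildeCLM α β j z • c j), ?_, fun w => ?_⟩
  · have hpair : (fun u => headPairing n (Ltilde n α β) u u) =
        fun u => ∑ j ∈ headIdx n, c j u * LtildeCLM α β j u := by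
      ext u
      simp [c, headPairing]
    rw [hpair]
    exact hasFDerivAt_sum_mul (headIdx n) c (LtildeCLM α β) z
  · simp [c, headPairing, sum_add_distrib, mul_comm, add_comm]

lemma fderiv_modelF_apply (α β : Fin n → Fin n → ℂ) (z w : Fin n → ℂ) (k : Fin n) :
    fderiv ℝ (modelF n α β) z w k = if (k : ℕ) + 1 = n then
      w k - I / 4 * (headPairing n (Ltilde n α β) w z + headPairing n (Ltilde n α β) z w)
        - I / 4 * (headPairing n (Ltilde n α 0) w z + headPairing n (Ltilde n α 0) z w)
      else w k := by
  obtain ⟨D, hD, hDw⟩ := hasFDerivAt_headPairing_Ltilde α β z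
  obtain ⟨D₀, hD₀, hD₀w⟩ := hasFDerivAt_headPairing_Ltilde α 0 z
  have hF : HasFDerivAt (modelF n α β) (ContinuousLinearMap.pi fun k =>
      if (k : ℕ) + 1 = n then ContinuousLinearMap.proj k - (I / 4) • D - (I / 4) • D₀
      else ContinuousLinearMap.proj k) z := by
    refine hasFDerivAt_pi.2 fun k => ?_
    split_ifs with hk
    · rw [show (fun z => modelF n α β z k) = _ from funext fun z => modelF_of_last α β z hk]
      exact ((hasFDerivAt_apply k z).sub (hD.const_mul _)).sub (hD₀.const_mul _)
    · simpa [modelF, hk] using hasFDerivAt_apply k z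
  rw [hF.fderiv]
  split_ifs with hk <;> simp [hk, hDw, hD₀w]

lemma symm_of_dbar_Ltilde_symm (α β : Fin n → Fin n → ℂ)
    (hcompat : ∀ (j k : Fin n) (z : Fin n → ℂ), (j : ℕ) + 1 < n → (k : ℕ) + 1 < n →
      dbar n (Ltilde n α β k) j z = dbar n (Ltilde n α β j) k z) :
    ∀ j ∈ headIdx n, ∀ k ∈ headIdx n, β j k = β k j := by
  intro j hj k hk
  rcases eq_or_ne j k with rfl | hjk
  · rfl
  have hj' := mem_headIdx.1 hj
  have hk' := mem_headIdx.1 hk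
  simpa [dbar_Ltilde, hjk, hjk.symm, hj', hk'] using hcompat j k 0 (by omega) (by omega)

end Model

theorem stmt5_general (n : ℕ) (α β : Fin n → Fin n → ℂ)
    (hcompat : ∀ (j k : Fin n) (z : Fin n → ℂ), (j : ℕ) + 1 < n → (k : ℕ) + 1 < n →
      dbar n (Ltilde n α β k) j z = dbar n (Ltilde n α β j) k z) :
    ∀ (z v : Fin n → ℂ),
      fderiv ℝ (modelF n α β) z (modelJ n α β z v) =
        Complex.I • fderiv ℝ (modelF n α β) z v := by
  have hβ := symm_of_dbar_Ltilde_symm α β hcompat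
  intro z v
  have hJ : ∀ l ∈ headIdx n, modelJ n α β z v l = I * v l :=
    fun l hl => modelJ_of_mem_headIdx α β z v hl
  ext k
  rw [Pi.smul_apply, smul_eq_mul, fderiv_modelF_apply, fderiv_modelF_apply]
  split_ifs with hk
  · rw [modelJ_of_last α β z v hk, headPairing_of_head_eq_mul_left _ hJ,
      headPairing_of_head_eq_mul_left _ hJ, headPairing_Ltilde_of_head_eq_mul_right α β hJ,
      headPairing_Ltilde_of_head_eq_mul_right α 0 hJ, headPairing_Ltilde_eq_add α β v z,
      headPairing_Ltilde_eq_add α β z v, headPairing_Ltilde_comm β hβ v z]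
    simp only [Ltilde_zero_zero, headPairing_zero, Complex.conj_I]
    linear_combination
      (headPairing n (Ltilde n α 0) v z + headPairing n (Ltilde n 0 β) z v) * Complex.I_sq
  · exact modelJ_of_mem_headIdx α β z v (mem_headIdx.2 hk)

/-- if the model structure `J` is integrable, i.e. satisfies the
compatibility conditions `∂L̃_{2n-1,k}/∂z̄^j = ∂L̃_{2n-1,j}/∂z̄^k`, then the global
diffeomorphism `F` above is `(J, J_st)`-holomorphic: `dF ∘ J = J_st ∘ dF`
(`J_st` being multiplication by `i`). -/
theorem stmt5 (n : ℕ) (hn : 1 ≤ n) (α β : Fin n → Fin n → ℂ)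
    (hcompat : ∀ (j k : Fin n) (z : Fin n → ℂ), (j : ℕ) + 1 < n → (k : ℕ) + 1 < n →
      dbar n (Ltilde n α β k) j z = dbar n (Ltilde n α β j) k z) :
    ∀ (z v : Fin n → ℂ),
      fderiv ℝ (modelF n α β) z (modelJ n α β z v) =
        Complex.I • fderiv ℝ (modelF n α β) z v :=
  stmt5_general n α β hcompat
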